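/- arXiv:1610.03214 — 3 statements merged into one kernel-verified Lean document; each statement's English description precedes it below -/
import Mathlib

section
/- Let Σ be a fan in N_ℝ, M_ℝ the dual space, M a lattice in M_ℝ dual to the lattice containing the cones' generators, and p : M_ℝ → T^n := M_ℝ/M the quotient map. For σ ∈ Σ define Λ_σ := ⋃_{τ face of σ} p(τ^⊥) × (−τ) ⊆ T^n × N_ℝ. Then for any two cones σ₁, σ₂ ∈ Σ one has Λ_{σ₁} ∩ Λ_{σ₂} = Λ_{σ₁ ∩ σ₂}. -/
/-- The convex cone generated by a set of vectors. -/
def coneSpan {V : Type*} [AddCommGroup V] [Module ℝ V] (S : Set V) : Set V :=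
  { x | ∃ (t : Finset V) (c : V → ℝ), ↑t ⊆ S ∧ (∀ v, 0 ≤ c v) ∧ x = ∑ v ∈ t, c v • v }

/-- A polyhedral cone. -/
def IsPolyCone {V : Type*} [AddCommGroup V] [Module ℝ V] (σ : Set V) : Prop :=
  ∃ S : Finset V, σ = coneSpan (S : Set V)

/-- `τ` is a face of the cone `σ`. -/
def IsFaceOf {V : Type*} [AddCommGroup V] [Module ℝ V] (τ σ : Set V) : Prop :=
  ∃ f : V →ₗ[ℝ] ℝ, (∀ x ∈ σ, 0 ≤ f x) ∧ τ = σ ∩ {x | f x = 0}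

/-- A fan. -/
structure IsFan {V : Type*} [AddCommGroup V] [Module ℝ V] (F : Set (Set V)) : Prop where
  finite : F.Finite
  poly : ∀ σ ∈ F, IsPolyCone σ
  strictly_convex : ∀ σ ∈ F, σ ∩ {x | -x ∈ σ} ⊆ {0}
  face_mem : ∀ σ ∈ F, ∀ τ : Set V, IsFaceOf τ σ → τ ∈ F
  inter_face : ∀ σ₁ ∈ F, ∀ σ₂ ∈ F, IsFaceOf (σ₁ ∩ σ₂) σ₁

/-- `Λ_σ := ⋃_{τ face of σ} p(τ^⊥) × (−τ)` inside `T^n × N_ℝ ≅ T^*T^n`, where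
`p : M_ℝ → T^n = M_ℝ/M` is the quotient by the lattice `M`. -/
def Lambda {V : Type*} [AddCommGroup V] [Module ℝ V]
    (M : Submodule ℤ (Module.Dual ℝ V)) (σ : Set V) :
    Set ((Module.Dual ℝ V ⧸ M.toAddSubgroup) × V) :=
  ⋃ τ ∈ { τ : Set V | IsFaceOf τ σ },
    ((QuotientAddGroup.mk' M.toAddSubgroup) '' { m | ∀ n ∈ τ, m n = 0 }) ×ˢ (Neg.neg '' τ)

lemma subset_coneSpan {V : Type*} [AddCommGroup V] [Module ℝ V] (S : Set V) :
    S ⊆ coneSpan S := by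
  intro v hv
  exact ⟨{v}, fun _ => 1, by simpa, fun _ => zero_le_one, by simp⟩

/-- A face of a face of a polyhedral cone is a face of that cone. -/
lemma isFaceOf_trans {V : Type*} [AddCommGroup V] [Module ℝ V] {σ ρ τ : Set V}
    (hσ : IsPolyCone σ) (hρ : IsFaceOf ρ σ) (hτ : IsFaceOf τ ρ) : IsFaceOf τ σ := by
  obtain ⟨S, rfl⟩ := hσ
  obtain ⟨g, hg, rfl⟩ := hρ
  obtain ⟨f, hf, rfl⟩ := hτ
  set C : ℝ := (∑ v ∈ S, max 0 (-(f v) / g v)) + 1 with hC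
  have key : ∀ v ∈ S, 0 ≤ f v + C * g v ∧ (0 < g v → 0 < f v + C * g v) := by
    intro v hv
    have hvσ : v ∈ coneSpan (S : Set V) := subset_coneSpan _ hv
    have hgv0 : 0 ≤ g v := hg v hvσ
    rcases hgv0.lt_or_eq with hpos | heq
    · have hb : -(f v) / g v < C := by
        have h1 := Finset.single_le_sum (f := fun w => max 0 (-(f w) / g w))
          (fun i _ => le_max_left 0 _) hv
        have h2 : -(f v) / g v ≤ ∑ w ∈ S, max 0 (-(f w) / g w) :=
          le_trans (le_max_right 0 _) h1
        rw [hC]; linarith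
      have hlt : -(f v) < C * g v := by rwa [div_lt_iff₀ hpos] at hb
      constructor
      · linarith
      · intro _; linarith
    · have hvρ : v ∈ coneSpan (S : Set V) ∩ {x | g x = 0} := ⟨hvσ, heq.symm⟩
      have hfv := hf v hvρ
      refine ⟨by rw [← heq]; linarith, fun h => absurd heq (by linarith)⟩
  refine ⟨f + C • g, ?_, ?_⟩
  · rintro x ⟨t, c, htS, hc, rfl⟩
    have : (f + C • g) (∑ v ∈ t, c v • v) = ∑ v ∈ t, c v * (f v + C * g v) := by
      rw [map_sum]
      refine Finset.sum_congr rfl fun v _ => ?_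
      simp [mul_add, mul_left_comm]
    rw [this]
    exact Finset.sum_nonneg fun v hv => mul_nonneg (hc v) (key v (htS hv)).1
  · ext x
    simp only [Set.mem_inter_iff, Set.mem_setOf_eq, LinearMap.add_apply,
      LinearMap.smul_apply, smul_eq_mul]
    constructor
    · rintro ⟨⟨hxσ, hgx⟩, hfx⟩
      exact ⟨hxσ, by rw [hgx, hfx]; ring⟩
    · rintro ⟨hxσ, hsum⟩
      obtain ⟨t, c, htS, hc, rfl⟩ := hxσ
      set x := ∑ v ∈ t, c v • v with hx
      have hexp : (f + C • g) x = ∑ v ∈ t, c v * (f v + C * g v) := by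
        rw [hx, map_sum]
        refine Finset.sum_congr rfl fun v _ => ?_
        simp [mul_add, mul_left_comm]
      have hterm : ∀ v ∈ t, c v * (f v + C * g v) = 0 := by
        have h0 : ∑ v ∈ t, c v * (f v + C * g v) = 0 := by
          rw [← hexp]
          simpa using hsum
        intro v hv
        exact (Finset.sum_eq_zero_iff_of_nonneg
          (fun v hv => mul_nonneg (hc v) (key v (htS hv)).1)).mp h0 v hv
      have hgx : g x = 0 := by
        rw [hx, map_sum]
        refine Finset.sum_eq_zero fun v hv => ?_
        rw [map_smul, smul_eq_mul]
        rcases eq_or_ne (c v) 0 with h | h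
        · rw [h, zero_mul]
        · have hgv0 : 0 ≤ g v := hg v (subset_coneSpan _ (htS hv))
          rcases hgv0.lt_or_eq with hpos | heq
          · exfalso
            have := (key v (htS hv)).2 hpos
            have := hterm v hv
            have hcv : 0 < c v := lt_of_le_of_ne (hc v) (Ne.symm h)
            nlinarith
          · rw [← heq, mul_zero]
      have hfx : f x = 0 := by
        have h1 : (f + C • g) x = 0 := by simpa using hsum
        have : f x + C * g x = 0 := by simpa using h1
        rw [hgx] at this; linarith
      exact ⟨⟨⟨t, c, htS, hc, rfl⟩, hgx⟩, hfx⟩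

/-- An intersection of faces is a face of the intersection. -/
lemma isFaceOf_inter {V : Type*} [AddCommGroup V] [Module ℝ V] {σ₁ σ₂ τ₁ τ₂ : Set V}
    (h1 : IsFaceOf τ₁ σ₁) (h2 : IsFaceOf τ₂ σ₂) : IsFaceOf (τ₁ ∩ τ₂) (σ₁ ∩ σ₂) := by
  obtain ⟨f₁, hf₁, rfl⟩ := h1
  obtain ⟨f₂, hf₂, rfl⟩ := h2
  refine ⟨f₁ + f₂, fun x hx => by
    simpa using add_nonneg (hf₁ x hx.1) (hf₂ x hx.2), ?_⟩
  ext x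
  simp only [Set.mem_inter_iff, Set.mem_setOf_eq, LinearMap.add_apply]
  constructor
  · rintro ⟨⟨hx1, ha⟩, hx2, hb⟩
    exact ⟨⟨hx1, hx2⟩, by rw [ha, hb]; ring⟩
  · rintro ⟨⟨hx1, hx2⟩, hsum⟩
    have a := hf₁ x hx1
    have b := hf₂ x hx2
    exact ⟨⟨hx1, by linarith⟩, hx2, by linarith⟩

/-- For any two cones `σ₁, σ₂` of a fan `Σ`, `Λ_{σ₁} ∩ Λ_{σ₂} = Λ_{σ₁ ∩ σ₂}`. -/
theorem stmt12 {V : Type*} [AddCommGroup V] [Module ℝ V] [FiniteDimensional ℝ V]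
    (M : Submodule ℤ (Module.Dual ℝ V))
    (F : Set (Set V)) (hF : IsFan F) (σ₁ σ₂ : Set V) (h1 : σ₁ ∈ F) (h2 : σ₂ ∈ F) :
    Lambda M σ₁ ∩ Lambda M σ₂ = Lambda M (σ₁ ∩ σ₂) := by
  have hp1 : IsPolyCone σ₁ := hF.poly σ₁ h1
  have hp2 : IsPolyCone σ₂ := hF.poly σ₂ h2
  have hface1 : IsFaceOf (σ₁ ∩ σ₂) σ₁ := hF.inter_face σ₁ h1 σ₂ h2
  have hface2 : IsFaceOf (σ₁ ∩ σ₂) σ₂ := by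
    have := hF.inter_face σ₂ h2 σ₁ h1
    rwa [Set.inter_comm] at this
  ext ⟨q, n⟩
  simp only [Lambda, Set.mem_inter_iff, Set.mem_iUnion, Set.mem_setOf_eq, Set.mem_prod,
    Set.mem_image, exists_prop]
  constructor
  · rintro ⟨⟨τ₁, hτ₁, ⟨m, hm, hmq⟩, y₁, hy₁, hyn₁⟩, τ₂, hτ₂, _, y₂, hy₂, hyn₂⟩
    refine ⟨τ₁ ∩ τ₂, isFaceOf_inter hτ₁ hτ₂, ⟨m, fun n hn => hm n hn.1, hmq⟩, ?_⟩
    have e1 : y₁ = -n := by rw [← hyn₁, neg_neg]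
    have e2 : y₂ = -n := by rw [← hyn₂, neg_neg]
    exact ⟨-n, ⟨e1 ▸ hy₁, e2 ▸ hy₂⟩, neg_neg n⟩
  · rintro ⟨τ, hτ, hq, hn⟩
    exact ⟨⟨τ, isFaceOf_trans hp1 hface1 hτ, hq, hn⟩,
           ⟨τ, isFaceOf_trans hp2 hface2 hτ, hq, hn⟩⟩
end

section
/- Let M be a lattice in M_ℝ and let σ^∨ ⊆ M_ℝ be a rational polyhedral cone. Let P ⊆ M_ℝ be a rational convex polyhedron whose recession cone is σ^∨ (e.g. P = σ^∨ + m₀ for a rational point m₀, or a finite union/intersection of such translates with recession cone σ^∨). Then the set of lattice points P ∩ M is a finitely generated module over the monoid σ^∨ ∩ M; that is, there exist finitely many m₁, …, m_s ∈ P ∩ M such that P ∩ M = ⋃_{i=1}^s ((σ^∨ ∩ M) + m_i). -/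
namespace Set.IsPWO

variable {α β : Type*} [PartialOrder α]

theorem exists_finite_subset_forall_exists_le {s : Set α} (hs : s.IsPWO) :
    ∃ t ⊆ s, t.Finite ∧ ∀ a ∈ s, ∃ b ∈ t, b ≤ a :=
  ⟨{b | Minimal (· ∈ s) b}, setOfPred_minimal_subset s,
    (setOfPred_minimal_antichain _).finite_of_partiallyWellOrderedOn
      (hs.mono (setOfPred_minimal_subset s)),
    fun _ ha => (hs.exists_le_minimal ha).imp fun _ ⟨hle, hmin⟩ => ⟨hmin, hle⟩⟩

theorem exists_finset_subset_forall_exists_le (g : β → α) {s : Set β} (hs : (g '' s).IsPWO) :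
    ∃ t : Finset β, ↑t ⊆ s ∧ ∀ x ∈ s, ∃ y ∈ t, g y ≤ g x := by
  obtain ⟨t, hts, htfin, hle⟩ := Set.exists_subset_image_finite_and.1
    (hs.exists_finite_subset_forall_exists_le)
  refine ⟨htfin.toFinset, by simpa using hts, fun x hx => ?_⟩
  obtain ⟨_, ⟨y, hy, rfl⟩, hyx⟩ := hle (g x) ⟨x, hx, rfl⟩
  exact ⟨y, by simpa using hy, hyx⟩

end Set.IsPWO

theorem isPWO_of_bddBelow_pi_int {ι : Type*} [Finite ι] {s : Set (ι → ℤ)} (hs : BddBelow s) :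
    s.IsPWO := by
  obtain ⟨a, ha⟩ := hs
  have hIci : ∀ i, (Set.Ici (a i)).IsPWO := fun i => Set.IsWF.isPWO bddBelow_Ici.wellFoundedOn_lt
  exact (Set.IsPWO.pi hIci).mono fun x hx i _ => ha hx i

section Polyhedron

variable {E ι : Type*} [AddCommGroup E] [Module ℝ E]

def polyhedron (f : ι → Module.Dual ℝ E) (c : ι → ℝ) : Set E :=
  {x | ∀ i, c i ≤ f i x}

def recessionCone (P : Set E) : Set E :=
  {v | ∀ x ∈ P, ∀ t : ℝ, 0 ≤ t → x + t • v ∈ P}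

theorem add_mem_of_mem_recessionCone {P : Set E} {x v : E} (hx : x ∈ P)
    (hv : v ∈ recessionCone P) : x + v ∈ P := by
  simpa using hv x hx 1 zero_le_one

variable {f : ι → Module.Dual ℝ E} {c : ι → ℝ}

theorem polyhedron_zero_subset_recessionCone :
    polyhedron f 0 ⊆ recessionCone (polyhedron f c) := by
  intro v hv x hx t ht i
  have := mul_nonneg ht (hv i)
  simp only [map_add, map_smul, smul_eq_mul]
  linarith [hx i]

theorem recessionCone_subset_polyhedron_zero (hP : (polyhedron f c).Nonempty) :
    recessionCone (polyhedron f c) ⊆ polyhedron f 0 := by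
  obtain ⟨x, hx⟩ := hP
  intro v hv i
  show 0 ≤ f i v
  by_contra! hneg
  -- `t` is chosen so that `f i (x + t • v) = c i - 1`
  set t := (f i x - c i + 1) / -f i v
  have ht : t * f i v = -(f i x - c i + 1) := by
    rw [div_mul_eq_mul_div, div_neg, mul_div_cancel_right₀ _ hneg.ne]
  have := hv x hx t (div_nonneg (by linarith [hx i]) (by linarith)) i
  simp only [map_add, map_smul, smul_eq_mul] at this
  linarith

theorem recessionCone_polyhedron (hP : (polyhedron f c).Nonempty) :
    recessionCone (polyhedron f c) = polyhedron f 0 :=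
  (recessionCone_subset_polyhedron_zero hP).antisymm polyhedron_zero_subset_recessionCone

theorem exists_finset_polyhedron_inter_eq_biUnion [Finite ι] (L : Submodule ℤ E)
    (hf : ∀ i, ∀ x ∈ L, ∃ k : ℤ, f i x = k) :
    ∃ s : Finset E, ↑s ⊆ polyhedron f c ∩ L ∧
      polyhedron f c ∩ L = ⋃ m ∈ s, (· + m) '' (polyhedron f 0 ∩ L) := by
  set P := polyhedron f c
  let val : E → ι → ℤ := fun m i => ⌊f i m⌋
  have hval : ∀ m ∈ L, ∀ i, (val m i : ℝ) = f i m := by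
    intro m hm i
    obtain ⟨k, hk⟩ := hf i m hm
    simp [val, hk]
  have hpwo : (val '' (P ∩ L)).IsPWO := isPWO_of_bddBelow_pi_int
    ⟨fun i => ⌊c i⌋, by rintro _ ⟨m, hm, rfl⟩ i; exact Int.floor_mono (hm.1 i)⟩
  obtain ⟨s, hsP, hs⟩ := hpwo.exists_finset_subset_forall_exists_le
  refine ⟨s, hsP, Set.Subset.antisymm (fun m hm => ?_) ?_⟩
  · obtain ⟨m', hm's, hle⟩ := hs m hm
    have hm' := hsP hm's
    refine Set.mem_biUnion hm's ⟨m - m', ⟨fun i => ?_, L.sub_mem hm.2 hm'.2⟩, sub_add_cancel m m'⟩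
    rw [Pi.zero_apply, map_sub, ← hval m hm.2, ← hval m' hm'.2, sub_nonneg]
    exact_mod_cast hle i
  · refine Set.iUnion₂_subset fun m hm => ?_
    rintro _ ⟨v, hv, rfl⟩
    show v + m ∈ P ∩ L
    rw [add_comm]
    exact ⟨add_mem_of_mem_recessionCone (hsP hm).1 (polyhedron_zero_subset_recessionCone hv.1),
      L.add_mem (hsP hm).2 hv.2⟩

end Polyhedron

theorem stmt13_general (E : Type*) [NormedAddCommGroup E] [NormedSpace ℝ E]
    (L : Submodule ℤ E)
    (S : Finset E)
    (ι : Type) [Fintype ι] (f : ι → Module.Dual ℝ E) (c : ι → ℝ)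
    (hf : ∀ i, ∀ x ∈ L, ∃ k : ℤ, f i x = (k : ℝ))
    (P : Set E) (hP : P = { x | ∀ i, c i ≤ f i x })
    (hrec : { v : E | ∀ x ∈ P, ∀ t : ℝ, 0 ≤ t → x + t • v ∈ P } = coneSpan (S : Set E)) :
    ∃ s : Finset E, ↑s ⊆ P ∩ (L : Set E) ∧
      P ∩ (L : Set E)
        = ⋃ m ∈ s, (fun x => x + m) '' (coneSpan (S : Set E) ∩ (L : Set E)) := by
  change P = polyhedron f c at hP
  subst hP
  rcases (polyhedron f c).eq_empty_or_nonempty with hempty | hne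
  · exact ⟨∅, by simp, by simp [hempty]⟩
  change recessionCone (polyhedron f c) = _ at hrec
  rw [← hrec, recessionCone_polyhedron hne]
  exact exists_finset_polyhedron_inter_eq_biUnion L hf

/-- Let `M` be a lattice in `M_ℝ`, `σ^∨` a rational polyhedral cone (generated by
the finite set `S` of lattice vectors), and `P` a rational convex polyhedron (cut
out by finitely many rational affine halfspaces) whose recession cone is `σ^∨`.
Then `P ∩ M` is a finitely generated module over the monoid `σ^∨ ∩ M`: there are
finitely many `m₁, …, m_s ∈ P ∩ M` with `P ∩ M = ⋃ᵢ ((σ^∨ ∩ M) + mᵢ)`. -/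
theorem stmt13 (E : Type*) [NormedAddCommGroup E] [NormedSpace ℝ E] [FiniteDimensional ℝ E]
    (L : Submodule ℤ E) [DiscreteTopology L] [IsZLattice ℝ L]
    (S : Finset E) (hS : ↑S ⊆ (L : Set E))
    (ι : Type) [Fintype ι] (f : ι → Module.Dual ℝ E) (c : ι → ℝ)
    (hf : ∀ i, ∀ x ∈ L, ∃ k : ℤ, f i x = (k : ℝ))
    (hc : ∀ i, ∃ q : ℚ, c i = (q : ℝ))
    (P : Set E) (hP : P = { x | ∀ i, c i ≤ f i x })
    (hrec : { v : E | ∀ x ∈ P, ∀ t : ℝ, 0 ≤ t → x + t • v ∈ P } = coneSpan (S : Set E)) :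
    ∃ s : Finset E, ↑s ⊆ P ∩ (L : Set E) ∧
      P ∩ (L : Set E)
        = ⋃ m ∈ s, (fun x => x + m) '' (coneSpan (S : Set E) ∩ (L : Set E)) :=
  stmt13_general E L S ι f c hf P hP hrec
end

section
/- Let σ^∨ ⊆ M_ℝ be a full-dimensional closed convex polyhedral cone with nonempty interior, and let v₁, …, v_s, w₁, …, w_t be nonzero vectors in the dual cone σ := (σ^∨)^∨ ⊆ N_ℝ. Let C := {m ∈ M_ℝ : ⟨m, v_i⟩ ≤ −n_i for i = 1,…,s and ⟨m, w_j⟩ > −l_j for j = 1,…,t} and assume C is bounded and each inequality defines a facet of the closure of C. Then for r ∈ M_ℝ, the set C_r := {(x, y) : x + y = r, x ∈ C, y ∈ Int(σ^∨)} is nonempty and open in the affine subspace {(x,y) : x + y = r} if and only if r ∈ C. -/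
/-!
Write `C = P ∩ W` with `P = {vᵢ ≤ -nᵢ}` closed and `W = {wⱼ > -lⱼ}` open and convex; since the
`vᵢ, wⱼ` are nonnegative on `K`, `P - K ⊆ P` and `W + K ⊆ W`. If `r ∈ C`, then `r - K ⊆ P`, so
`C_r = W ∩ (r - Int K)` is open, and it contains `r - εy` for `y ∈ Int K` and small `ε > 0`.
Conversely, if `C_r` is open and contains `x₀`, then `r ∈ W` because `r ∈ x₀ + K`, and every point
of the half-open segment `(r, x₀]` lies in `W ∩ (r - Int K)`, hence in `C_r` as soon as it lies in
`P ⊇ closure C_r`. By connectedness the whole segment lies in the open set `C_r ⊆ P`, and `r ∈ P`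
because `P` is closed.
-/

open Filter Topology Set
open scoped Pointwise

section ConeShift

variable {E : Type*} [AddCommGroup E] [Module ℝ E] [TopologicalSpace E] [ContinuousSMul ℝ E]
  {K P W : Set E}

theorem smul_mem_interior_of_smul_mem (hK : ∀ a : ℝ, 0 ≤ a → ∀ x ∈ K, a • x ∈ K)
    {a : ℝ} (ha : 0 < a) {y : E} (hy : y ∈ interior K) : a • y ∈ interior K := by
  have hsub : a • K ⊆ K := by
    rintro _ ⟨x, hx, rfl⟩
    exact hK a ha.le x hx
  have : a • y ∈ interior (a • K) := by
    rw [interior_smul₀ ha.ne']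
    exact smul_mem_smul_set hy
  exact interior_mono hsub this

variable [IsTopologicalAddGroup E]

theorem nonempty_setOf_mem_inter_sub_mem_interior (hK : ∀ a : ℝ, 0 ≤ a → ∀ x ∈ K, a • x ∈ K)
    (hint : (interior K).Nonempty) (hPK : ∀ x ∈ P, ∀ k ∈ K, x - k ∈ P) (hW : IsOpen W)
    {r : E} (hr : r ∈ P ∩ W) : {x | x ∈ P ∩ W ∧ r - x ∈ interior K}.Nonempty := by
  obtain ⟨y, hy⟩ := hint
  have hnear : ∀ᶠ ε : ℝ in 𝓝 0, r - ε • y ∈ W :=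
    (Continuous.tendsto' (by fun_prop) 0 r (by simp)).eventually (hW.mem_nhds hr.2)
  obtain ⟨ε, hε, hεW⟩ := hnear.exists_gt
  have hεy : ε • y ∈ interior K := smul_mem_interior_of_smul_mem hK hε hy
  refine ⟨r - ε • y, ⟨hPK r hr.1 _ (interior_subset hεy), hεW⟩, ?_⟩
  simpa using hεy

theorem mem_of_isOpen_setOf_mem_inter_sub_mem_interior
    (hK : ∀ a : ℝ, 0 ≤ a → ∀ x ∈ K, a • x ∈ K) (hP : IsClosed P) (hWc : Convex ℝ W)
    (hWK : ∀ x ∈ W, ∀ k ∈ K, x + k ∈ W) {r : E}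
    (hne : {x | x ∈ P ∩ W ∧ r - x ∈ interior K}.Nonempty)
    (hopen : IsOpen {x | x ∈ P ∩ W ∧ r - x ∈ interior K}) : r ∈ P ∩ W := by
  set S := {x | x ∈ P ∩ W ∧ r - x ∈ interior K}
  obtain ⟨x₀, ⟨hx₀P, hx₀W⟩, hx₀K⟩ := hne
  have hrW : r ∈ W := by simpa using hWK x₀ hx₀W (r - x₀) (interior_subset hx₀K)
  set seg : ℝ → E := fun t => r + t • (x₀ - r)
  have hseg : Continuous seg := by fun_prop
  have hsegS : seg '' Ioc 0 1 ⊆ S := by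
    refine (isPreconnected_Ioc.image seg hseg.continuousOn).subset_of_closure_inter_subset
      hopen ⟨x₀, ⟨1, ⟨zero_lt_one, le_rfl⟩, by simp [seg]⟩, ⟨hx₀P, hx₀W⟩, hx₀K⟩ ?_
    rintro _ ⟨hcl, t, ⟨ht₀, ht₁⟩, rfl⟩
    have hsub : r - seg t = t • (r - x₀) := by simp only [seg]; module
    refine ⟨⟨closure_minimal (fun x hx => hx.1.1) hP hcl,
      hWc.add_smul_sub_mem hrW hx₀W ⟨ht₀.le, ht₁⟩⟩, ?_⟩
    rw [hsub]
    exact smul_mem_interior_of_smul_mem hK ht₀ hx₀K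
  have hr_cl : seg 0 ∈ closure (seg '' Ioc 0 1) :=
    hseg.continuousWithinAt.mem_closure_image (by simp [closure_Ioc zero_ne_one])
  exact ⟨closure_minimal (hsegS.trans fun x hx => hx.1.1) hP (by simpa [seg] using hr_cl), hrW⟩

theorem nonempty_and_isOpen_setOf_mem_inter_sub_mem_interior_iff
    (hK : ∀ a : ℝ, 0 ≤ a → ∀ x ∈ K, a • x ∈ K) (hint : (interior K).Nonempty)
    (hP : IsClosed P) (hPK : ∀ x ∈ P, ∀ k ∈ K, x - k ∈ P)
    (hWo : IsOpen W) (hWc : Convex ℝ W) (hWK : ∀ x ∈ W, ∀ k ∈ K, x + k ∈ W) (r : E) :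
    ({x | x ∈ P ∩ W ∧ r - x ∈ interior K}.Nonempty ∧
      IsOpen {x | x ∈ P ∩ W ∧ r - x ∈ interior K}) ↔ r ∈ P ∩ W := by
  refine ⟨fun ⟨hne, hopen⟩ => mem_of_isOpen_setOf_mem_inter_sub_mem_interior hK hP hWc hWK hne
    hopen, fun hr => ⟨nonempty_setOf_mem_inter_sub_mem_interior hK hint hPK hWo hr, ?_⟩⟩
  have hrK : {x | r - x ∈ K} ⊆ P := fun x hx => by simpa using hPK r hr.1 (r - x) hx
  have hS : {x | x ∈ P ∩ W ∧ r - x ∈ interior K} = W ∩ {x | r - x ∈ interior K} := by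
    ext x
    exact ⟨fun ⟨⟨_, hxW⟩, hxK⟩ => ⟨hxW, hxK⟩,
      fun ⟨hxW, hxK⟩ => ⟨⟨hrK (show r - x ∈ K from interior_subset hxK), hxW⟩, hxK⟩⟩
  rw [hS]
  exact hWo.inter (isOpen_interior.preimage (continuous_const.sub continuous_id))

end ConeShift

theorem stmt14_general (E : Type*) [NormedAddCommGroup E] [NormedSpace ℝ E] [FiniteDimensional ℝ E]
    (K : Set E) (hcone : ∀ a : ℝ, 0 ≤ a → ∀ x ∈ K, a • x ∈ K)
    (hint : (interior K).Nonempty)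
    (s t : ℕ) (v : Fin s → Module.Dual ℝ E) (w : Fin t → Module.Dual ℝ E)
    (n : Fin s → ℝ) (l : Fin t → ℝ)
    (hv : ∀ i, v i ≠ 0 ∧ ∀ x ∈ K, 0 ≤ v i x)
    (hw : ∀ j, w j ≠ 0 ∧ ∀ x ∈ K, 0 ≤ w j x)
    (C : Set E) (hC : C = { m | (∀ i, v i m ≤ -n i) ∧ (∀ j, -l j < w j m) }) :
    ∀ r : E,
      (({ x : E | x ∈ C ∧ r - x ∈ interior K }).Nonempty ∧
        IsOpen { x : E | x ∈ C ∧ r - x ∈ interior K }) ↔ r ∈ C := by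
  have hvc : ∀ i, Continuous (v i) := fun i => (v i).continuous_of_finiteDimensional
  have hwc : ∀ j, Continuous (w j) := fun j => (w j).continuous_of_finiteDimensional
  set P := ⋂ i, v i ⁻¹' Iic (-n i)
  set W := ⋂ j, w j ⁻¹' Ioi (-l j)
  have hCPW : C = P ∩ W := by ext; simp [hC, P, W]
  have hP : IsClosed P := isClosed_iInter fun i => isClosed_Iic.preimage (hvc i)
  have hPK : ∀ x ∈ P, ∀ k ∈ K, x - k ∈ P := by
    simp only [P, mem_iInter, mem_preimage, mem_Iic, map_sub]
    exact fun x hx k hk i => (sub_le_self _ ((hv i).2 k hk)).trans (hx i)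
  have hWo : IsOpen W := isOpen_iInter_of_finite fun j => isOpen_Ioi.preimage (hwc j)
  have hWc : Convex ℝ W := convex_iInter fun j => convex_halfSpace_gt (w j).isLinear _
  have hWK : ∀ x ∈ W, ∀ k ∈ K, x + k ∈ W := by
    simp only [W, mem_iInter, mem_preimage, mem_Ioi, map_add]
    exact fun x hx k hk j => (hx j).trans_le (le_add_of_nonneg_right ((hw j).2 k hk))
  subst hCPW
  exact nonempty_and_isOpen_setOf_mem_inter_sub_mem_interior_iff hcone hint hP hPK hWo hWc hWK

/-- Let `K = σ^∨ ⊆ M_ℝ` be a full-dimensional closed convex polyhedral cone with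
nonempty interior, and let `v₁,…,v_s, w₁,…,w_t` be nonzero elements of the dual
cone `σ = (σ^∨)^∨ ⊆ N_ℝ`.  Let
`C = {m | ⟨m, vᵢ⟩ ≤ −nᵢ ∀i, ⟨m, wⱼ⟩ > −lⱼ ∀j}`, assumed bounded, each inequality
defining a facet of the closure of `C`.  Then for `r ∈ M_ℝ`, the set
`C_r = {(x,y) | x + y = r, x ∈ C, y ∈ Int σ^∨}` (parametrized here by its first
coordinate) is nonempty and open in `{x + y = r}` if and only if `r ∈ C`. -/
theorem stmt14 (E : Type*) [NormedAddCommGroup E] [NormedSpace ℝ E] [FiniteDimensional ℝ E]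
    (K : Set E) (hconv : Convex ℝ K) (hcone : ∀ a : ℝ, 0 ≤ a → ∀ x ∈ K, a • x ∈ K)
    (hclosed : IsClosed K) (hpoly : ∃ S : Finset E, K = coneSpan (S : Set E))
    (hint : (interior K).Nonempty)
    (s t : ℕ) (v : Fin s → Module.Dual ℝ E) (w : Fin t → Module.Dual ℝ E)
    (n : Fin s → ℝ) (l : Fin t → ℝ)
    (hv : ∀ i, v i ≠ 0 ∧ ∀ x ∈ K, 0 ≤ v i x)
    (hw : ∀ j, w j ≠ 0 ∧ ∀ x ∈ K, 0 ≤ w j x)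
    (C : Set E) (hC : C = { m | (∀ i, v i m ≤ -n i) ∧ (∀ j, -l j < w j m) })
    (hbounded : Bornology.IsBounded C)
    (hfacetv : ∀ i, ∃ m ∈ closure C, v i m = -n i ∧
      (∀ i', i' ≠ i → v i' m < -n i') ∧ (∀ j, -l j < w j m))
    (hfacetw : ∀ j, ∃ m ∈ closure C, w j m = -l j ∧
      (∀ i, v i m < -n i) ∧ (∀ j', j' ≠ j → -l j' < w j' m)) :
    ∀ r : E,
      (({ x : E | x ∈ C ∧ r - x ∈ interior K }).Nonempty ∧
        IsOpen { x : E | x ∈ C ∧ r - x ∈ interior K }) ↔ r ∈ C :=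
  stmt14_general E K hcone hint s t v w n l hv hw C hC
end
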